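/- The subset X = (−1, 0) ∪ {n : n ∈ ℕ, n ≥ 1} of the real line, with the metric induced from ℝ, is a minimal universal metric space for the class 𝔉₂ of all metric spaces with at most two points; that is, every metric space with at most two points embeds isometrically into X, and no proper subset of X (with the induced metric) has this property. -/

import Mathlib

/-!
A metric space is universal for two-point spaces exactly when it realizes every nonnegative
real as a distance, and `X15` does. Minimality: for `n ≥ 1` and `x ∈ (-1, 0)` the distance
`n - x` exceeds `1` and is not an integer, so the only pair of points of `X15` realizing it is
`{x, n}`; hence a universal subset contains every point of `X15`.
-/

universe u v

open Function Set

/-- `f` is an isometric (distance-preserving) embedding of metric spaces. -/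
def IsIsomEmb {X : Type u} {Y : Type v} [MetricSpace X] [MetricSpace Y] (f : X → Y) : Prop :=
  ∀ a b : X, dist (f a) (f b) = dist a b

/-- `X` embeds isometrically into `Y`. -/
def IsomEmbeds (X : Type u) (Y : Type v) [MetricSpace X] [MetricSpace Y] : Prop :=
  ∃ f : X → Y, IsIsomEmb f

/-- `Y` is universal for the class `𝔉₂` of all metric spaces with at most two points. -/
def F2Universal (Y : Type v) [MetricSpace Y] : Prop :=
  ∀ (A : Type u) [MetricSpace A], Cardinal.mk A ≤ 2 → IsomEmbeds A Y

/-- The subset `(-1, 0) ∪ {1, 2, 3, …}` of the real line. -/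
def X15 : Set ℝ := Set.Ioo (-1 : ℝ) 0 ∪ {x : ℝ | ∃ n : ℕ, 1 ≤ n ∧ x = n}

open Cardinal

lemma eq_of_ne_of_ne_of_mk_le_two {A : Type u} (hA : #A ≤ 2) {a c d : A}
    (hc : c ≠ a) (hd : d ≠ a) : c = d := by
  have : Finite A := lt_aleph0_iff_finite.mp (hA.trans_lt (natCast_lt_aleph0 (n := 2)))
  have := Fintype.ofFinite A
  rw [mk_fintype, Nat.cast_le_ofNat] at hA
  by_contra hcd
  exact hA.not_gt (Fintype.two_lt_card_iff.mpr ⟨a, c, d, hc.symm, hd.symm, hcd⟩)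

theorem f2Universal_iff {Y : Type v} [MetricSpace Y] :
    F2Universal.{u} Y ↔ ∀ r : ℝ, 0 ≤ r → ∃ p q : Y, dist p q = r := by
  constructor
  · intro hY r hr
    have hcard : #(ULift.{u} ({0, r} : Set ℝ)) ≤ 2 := by
      rw [mk_uLift, ← lift_two.{u, 0}, lift_le]
      exact mk_insert_le.trans (by rw [mk_singleton]; norm_num)
    obtain ⟨f, hf⟩ := hY _ hcard
    refine ⟨f ⟨⟨0, by simp⟩⟩, f ⟨⟨r, by simp⟩⟩, ?_⟩
    rw [hf, ULift.dist_eq, Subtype.dist_eq, Real.dist_eq, zero_sub, abs_neg, abs_of_nonneg hr]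
  · intro hY A _ hA
    rcases subsingleton_or_nontrivial A with _ | _
    · obtain ⟨p, -, -⟩ := hY 0 le_rfl
      exact ⟨fun _ => p, fun a b => by simp [Subsingleton.elim a b]⟩
    obtain ⟨a, b, hab⟩ := exists_pair_ne A
    obtain ⟨p, q, hpq⟩ := hY (dist a b) dist_nonneg
    have a_or_b : ∀ c, c = a ∨ c = b := fun c =>
      or_iff_not_imp_left.mpr fun hc => eq_of_ne_of_ne_of_mk_le_two hA hc hab.symm
    classical
    refine ⟨fun c => if c = a then p else q, fun c d => ?_⟩
    rcases a_or_b c with rfl | rfl <;> rcases a_or_b d with rfl | rfl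
    · simp
    · simp [hab.symm, hpq]
    · simp [hab.symm, dist_comm q p, dist_comm d c, hpq]
    · simp

lemma natCast_mem_X15 {n : ℕ} (hn : 1 ≤ n) : (n : ℝ) ∈ X15 := Or.inr ⟨n, hn, rfl⟩

lemma exists_mem_X15_abs_sub_eq {r : ℝ} (hr : 0 ≤ r) :
    ∃ p ∈ X15, ∃ q ∈ X15, |p - q| = r := by
  rcases lt_or_ge r 1 with hr1 | hr1
  · refine ⟨-(1 + r) / 2, Or.inl ⟨by linarith, by linarith⟩,
      -(1 - r) / 2, Or.inl ⟨by linarith, by linarith⟩, ?_⟩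
    rw [abs_of_nonpos (by linarith)]
    ring
  set n := ⌊r⌋₊
  have hn : 1 ≤ n := Nat.le_floor (by exact_mod_cast hr1)
  have hnr : (n : ℝ) ≤ r := Nat.floor_le hr
  have hrn : r < n + 1 := Nat.lt_floor_add_one r
  rcases hnr.eq_or_lt with hnr | hnr
  · refine ⟨(n + 1 : ℕ), natCast_mem_X15 (by omega), (1 : ℕ), natCast_mem_X15 le_rfl, ?_⟩
    push_cast
    rw [add_sub_cancel_right, abs_of_nonneg n.cast_nonneg, hnr]
  · refine ⟨n, natCast_mem_X15 hn, n - r, Or.inl ⟨by linarith, by linarith⟩, ?_⟩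
    rw [sub_sub_cancel, abs_of_nonneg hr]

theorem f2Universal_X15 : F2Universal.{u} X15 :=
  f2Universal_iff.mpr fun _ hr =>
    let ⟨p, hp, q, hq, hpq⟩ := exists_mem_X15_abs_sub_eq hr
    ⟨⟨p, hp⟩, ⟨q, hq⟩, by rw [Subtype.dist_eq, Real.dist_eq, hpq]⟩

lemma eq_of_mem_X15_of_sub_eq {a b x : ℝ} {n : ℕ} (ha : a ∈ X15) (hb : b ∈ X15) (hn : 1 ≤ n)
    (hx : x ∈ Ioo (-1 : ℝ) 0) (hab : b - a = n - x) : a = x ∧ b = n := by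
  have hn' : (1 : ℝ) ≤ n := by exact_mod_cast hn
  obtain ⟨hx1, hx2⟩ := hx
  rcases ha with ⟨ha1, ha2⟩ | ⟨k, hk, rfl⟩ <;> rcases hb with ⟨hb1, hb2⟩ | ⟨m, hm, rfl⟩
  · linarith
  · have hmn : m = n := by
      have h1 : n < m + 1 := by exact_mod_cast (by linarith : (n : ℝ) < m + 1)
      have h2 : m < n + 1 := by exact_mod_cast (by linarith : (m : ℝ) < n + 1)
      omega
    subst hmn
    exact ⟨by linarith, rfl⟩
  · have : (1 : ℝ) ≤ k := by exact_mod_cast hk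
    linarith
  · -- `m - k` would be an integer strictly between `n` and `n + 1`
    have h1 : (n : ℤ) < m - k := by exact_mod_cast (by linarith : (n : ℝ) < m - k)
    have h2 : (m : ℤ) - k < n + 1 := by exact_mod_cast (by linarith : (m : ℝ) - k < n + 1)
    omega

lemma pair_eq_of_mem_X15_of_abs_sub_eq {a b x : ℝ} {n : ℕ} (ha : a ∈ X15) (hb : b ∈ X15)
    (hn : 1 ≤ n) (hx : x ∈ Ioo (-1 : ℝ) 0) (hab : |a - b| = n - x) :
    ({a, b} : Set ℝ) = {x, (n : ℝ)} := by
  rcases (abs_eq (by linarith [hx.2])).mp hab with h | h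
  · obtain ⟨rfl, rfl⟩ := eq_of_mem_X15_of_sub_eq hb ha hn hx h
    exact pair_comm _ _
  · obtain ⟨rfl, rfl⟩ := eq_of_mem_X15_of_sub_eq ha hb hn hx (by linarith)
    rfl

lemma mem_of_f2Universal {S : Set X15} (hS : F2Universal.{u} S) {x : ℝ} {n : ℕ} (hn : 1 ≤ n)
    (hx : x ∈ Ioo (-1 : ℝ) 0) {p : X15} (hp : (p : ℝ) ∈ ({x, (n : ℝ)} : Set ℝ)) : p ∈ S := by
  obtain ⟨a, b, hab⟩ := f2Universal_iff.mp hS (n - x) (by linarith [hx.2])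
  rw [Subtype.dist_eq, Subtype.dist_eq, Real.dist_eq] at hab
  rw [← pair_eq_of_mem_X15_of_abs_sub_eq a.1.2 b.1.2 hn hx hab] at hp
  rcases hp with hp | hp
  · exact (Subtype.ext hp : p = a) ▸ a.2
  · exact (Subtype.ext hp : p = b) ▸ b.2

theorem statement15 :
    F2Universal ↥X15 ∧ ∀ S : Set ↥X15, F2Universal ↥S → S = Set.univ := by
  refine ⟨f2Universal_X15, fun S hS => eq_univ_of_forall fun p => ?_⟩
  rcases p with ⟨p, hp | ⟨n, hn, rfl⟩⟩
  · exact mem_of_f2Universal hS le_rfl hp (Or.inl rfl)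
  · exact mem_of_f2Universal hS hn (x := -1 / 2) ⟨by norm_num, by norm_num⟩ (Or.inr rfl)
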